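/- arXiv:2109.03534 — 2 statements merged into one kernel-verified Lean document; each statement's English description precedes it below -/
import Mathlib

section
/- For all k ≥ 0, a_k(3) = (k+1)·G_2 + (binomial(k+1, k-1) + 1)·G_1. -/
/-- Binomial coefficient with an integer lower index, zero when the lower index is negative. -/
def ichoose (m : ℕ) (l : ℤ) : ℕ := if 0 ≤ l then m.choose l.toNat else 0

/-- The `k`-fold partial sum operator applied to a sequence `G` (indexed from 1). -/
def a (G : ℕ → ℕ) : ℕ → ℕ → ℕ
  | 0, n => G n
  | k + 1, n => ∑ i ∈ Finset.Icc 1 n, a G k i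

lemma a_succ_succ (G : ℕ → ℕ) (k n : ℕ) : a G (k + 1) (n + 1) = a G (k + 1) n + a G k (n + 1) :=
  Finset.sum_Icc_succ_top (Nat.le_add_left 1 n) _

lemma a_one (G : ℕ → ℕ) (k : ℕ) : a G k 1 = G 1 := by
  induction k with
  | zero => rfl
  | succ k ih => simp [a, ih]

lemma a_two (G : ℕ → ℕ) (k : ℕ) : a G k 2 = G 2 + k * G 1 := by
  induction k with
  | zero => simp [a]
  | succ k ih => rw [a_succ_succ, a_one, ih]; ring

lemma ichoose_succ_self_sub_one (k : ℕ) : ichoose (k + 1) ((k : ℤ) - 1) = (k + 1).choose 2 := by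
  cases k with
  | zero => simp [ichoose]
  | succ j =>
    rw [ichoose, if_pos (by omega), show ((j + 1 : ℕ) : ℤ) - 1 = j by push_cast; ring,
      Int.toNat_natCast]
    exact Nat.choose_symm_of_eq_add (by omega)

lemma a_three (G : ℕ → ℕ) (hG3 : G 3 = G 2 + G 1) (k : ℕ) :
    a G k 3 = (k + 1) * G 2 + ((k + 1).choose 2 + 1) * G 1 := by
  induction k with
  | zero => simpa [a] using hG3
  | succ k ih =>
    rw [a_succ_succ, a_two, ih, Nat.choose_succ_succ' (k + 1) 1, Nat.choose_one_right]
    ring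

theorem partial_sum_gibonacci_at_three_general (G : ℕ → ℕ)
    (hG : ∀ n ≥ 1, G (n + 2) = G (n + 1) + G n)
    (k : ℕ) :
    a G k 3 = (k + 1) * G 2 + (ichoose (k + 1) ((k : ℤ) - 1) + 1) * G 1 := by
  rw [ichoose_succ_self_sub_one]
  exact a_three G (hG 1 le_rfl) k

theorem partial_sum_gibonacci_at_three (G : ℕ → ℕ)
    (hG1 : 0 < G 1) (hG2 : 0 < G 2)
    (hG : ∀ n ≥ 1, G (n + 2) = G (n + 1) + G n)
    (k : ℕ) :
    a G k 3 = (k + 1) * G 2 + (ichoose (k + 1) ((k : ℤ) - 1) + 1) * G 1 :=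
  partial_sum_gibonacci_at_three_general G hG k
end

section
/- For all n, k ≥ 1, a_k(n) = a_{k-1}(n+2) − binomial(n+k−1, k−1)·G_2 − binomial(n+k−1, k−2)·G_1. -/
/-!
Compare `a G k (n + 2)` with `a G (k + 1) n`. For `k = 0` the excess is `G 2`, by the classical
identity `G 1 + ⋯ + G n = G (n + 2) - G 2`. Summing an excess relation at level `k` over
`i = 1, …, n` gives one at level `k + 1`, where the two terms of `a G (k + 1) (n + 2)` not reached
by the shift, `a G k 1 = G 1` and `a G k 2 = k * G 1 + G 2`, join the summed coefficients.
The hockey-stick identity then identifies the coefficients of `G 2` and `G 1` as binomials.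
-/

open Finset

lemma sum_Icc_one_eq_sum_range {M : Type*} [AddCommMonoid M] (f : ℕ → M) (n : ℕ) :
    ∑ i ∈ Icc 1 n, f i = ∑ i ∈ range n, f (i + 1) := by
  rw [← Ico_add_one_right_eq_Icc, sum_Ico_eq_sum_range, Nat.add_sub_cancel]
  simp only [add_comm 1]

section

variable (G : ℕ → ℕ)

lemma a_succ_eq_sum_range (k n : ℕ) : a G (k + 1) n = ∑ i ∈ range n, a G k (i + 1) :=
  sum_Icc_one_eq_sum_range _ n

lemma a_one_right (k : ℕ) : a G k 1 = G 1 := by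
  induction k with
  | zero => rfl
  | succ k ih => simp [a_succ_eq_sum_range, ih]

lemma a_two_right (k : ℕ) : a G k 2 = k * G 1 + G 2 := by
  induction k with
  | zero => simp [a]
  | succ k ih =>
    rw [a_succ_eq_sum_range, sum_range_succ, sum_range_one, a_one_right, ih]
    ring

lemma a_succ_add_two (k n : ℕ) :
    a G (k + 1) (n + 2) = (k + 1) * G 1 + G 2 + ∑ i ∈ range n, a G k (i + 1 + 2) := by
  rw [a_succ_eq_sum_range, sum_range_succ' _ (n + 1), sum_range_succ' _ n, a_one_right,
    a_two_right]
  ring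

lemma a_succ_add_two_eq_of_forall_add_two (k : ℕ) (b c : ℕ → ℕ)
    (h : ∀ i, a G k (i + 2) = a G (k + 1) i + b i * G 2 + c i * G 1) (n : ℕ) :
    a G (k + 1) (n + 2) = a G (k + 2) n + (1 + ∑ i ∈ range n, b (i + 1)) * G 2
      + (k + 1 + ∑ i ∈ range n, c (i + 1)) * G 1 := by
  rw [a_succ_add_two, a_succ_eq_sum_range G (k + 1)]
  simp only [h, sum_add_distrib, ← sum_mul]
  ring

variable {G}

lemma a_zero_add_two (hG : ∀ n ≥ 1, G (n + 2) = G (n + 1) + G n) (n : ℕ) :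
    a G 0 (n + 2) = a G 1 n + G 2 := by
  induction n with
  | zero => simp [a]
  | succ n ih =>
    rw [a_succ_eq_sum_range, sum_range_succ, ← a_succ_eq_sum_range]
    simp only [a] at ih ⊢
    rw [hG (n + 1) n.succ_pos, ih]
    ring

lemma a_succ_add_two_eq (hG : ∀ n ≥ 1, G (n + 2) = G (n + 1) + G n) (j n : ℕ) :
    a G (j + 1) (n + 2) = a G (j + 2) n + (n + j + 1).choose (j + 1) * G 2
      + (n + j + 1).choose j * G 1 := by
  induction j generalizing n with
  | zero =>
    rw [a_succ_add_two_eq_of_forall_add_two G 0 (fun _ => 1) (fun _ => 0)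
      (fun i => by simpa using a_zero_add_two hG i)]
    simp [add_comm]
  | succ j ih =>
    rw [a_succ_add_two_eq_of_forall_add_two G (j + 1) _ _ ih]
    have hcoeff₂ : 1 + ∑ i ∈ range n, (i + 1 + j + 1).choose (j + 1)
        = (n + (j + 1) + 1).choose (j + 1 + 1) := by
      rw [← Nat.sum_range_add_choose, sum_range_succ']
      simp only [zero_add, Nat.choose_self, ← add_assoc, add_comm 1]
    have hcoeff₁ : j + 1 + 1 + ∑ i ∈ range n, (i + 1 + j + 1).choose j
        = (n + (j + 1) + 1).choose (j + 1) := by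
      rw [show n + (j + 1) + 1 = n + 1 + j + 1 by ring, ← Nat.sum_range_add_choose,
        sum_range_succ', sum_range_succ', zero_add, zero_add, add_comm 1 j,
        Nat.choose_succ_self_right, Nat.choose_self]
      ring_nf
    rw [hcoeff₁, hcoeff₂]

end

theorem partial_sum_gibonacci_recurrence_general (G : ℕ → ℕ)
    (hG : ∀ n ≥ 1, G (n + 2) = G (n + 1) + G n)
    (n k : ℕ) (hk : 1 ≤ k) :
    (a G k n : ℤ) = (a G (k - 1) (n + 2) : ℤ)
      - ((n + k - 1).choose (k - 1) : ℤ) * G 2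
      - (ichoose (n + k - 1) ((k : ℤ) - 2) : ℤ) * G 1 := by
  obtain ⟨j, rfl⟩ := Nat.exists_eq_add_of_le' hk
  rcases j with _ | j
  · simp [ichoose, a_zero_add_two hG n]
  · have hichoose :
        ichoose (n + (j + 1 + 1) - 1) ((j + 1 + 1 : ℕ) - 2 : ℤ) = (n + j + 1).choose j := by
      rw [ichoose, if_pos (by omega), show ((j + 1 + 1 : ℕ) : ℤ) - 2 = j by push_cast; ring,
        Int.toNat_natCast, show n + (j + 1 + 1) - 1 = n + j + 1 by omega]
    rw [hichoose, show n + (j + 1 + 1) - 1 = n + j + 1 by omega, Nat.add_sub_cancel,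
      a_succ_add_two_eq hG j n]
    push_cast
    ring

theorem partial_sum_gibonacci_recurrence (G : ℕ → ℕ)
    (hG1 : 0 < G 1) (hG2 : 0 < G 2)
    (hG : ∀ n ≥ 1, G (n + 2) = G (n + 1) + G n)
    (n k : ℕ) (hn : 1 ≤ n) (hk : 1 ≤ k) :
    (a G k n : ℤ) = (a G (k - 1) (n + 2) : ℤ)
      - ((n + k - 1).choose (k - 1) : ℤ) * G 2
      - (ichoose (n + k - 1) ((k : ℤ) - 2) : ℤ) * G 1 :=
  partial_sum_gibonacci_recurrence_general G hG n k hk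
end
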